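/- arXiv:2411.16647 — 2 statements merged into one kernel-verified Lean document; each statement's English description precedes it below -/
import Mathlib

section
/- Let X be a finite set, ψ : X → (0,1], and for n ≥ 1 define F_n = Σ over ordered n-tuples (x_1,…,x_n) of pairwise distinct elements of X of ψ(x_1)⋯ψ(x_n) (with F_0 = 1). Then for every n ≥ 1: F_1·F_n ≤ F_{n+1} + n·F_n. -/
open scoped Classical

/-- `Fsum X ψ n` is the sum over ordered n-tuples of pairwise distinct elements of the
finite set `X` of the products ψ(x_1)⋯ψ(x_n); `Fsum X ψ 0 = 1`. -/
noncomputable def Fsum {α : Type*} [Fintype α] (X : Finset α) (ψ : α → ℝ) (n : ℕ) : ℝ :=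
  ∑ f : Fin n → α,
    if Function.Injective f ∧ ∀ i, f i ∈ X then ∏ i, ψ (f i) else 0

/-- For ψ : X → (0,1] and n ≥ 1, F_1·F_n ≤ F_{n+1} + n·F_n. -/
theorem stmt8 {α : Type*} [Fintype α] (X : Finset α) (ψ : α → ℝ)
    (hψ : ∀ x ∈ X, 0 < ψ x ∧ ψ x ≤ 1) :
    ∀ n : ℕ, 1 ≤ n →
      Fsum X ψ 1 * Fsum X ψ n ≤ Fsum X ψ (n + 1) + (n : ℝ) * Fsum X ψ n := by
  intro n _
  have hF1 : Fsum X ψ 1 = ∑ x : α, if x ∈ X then ψ x else 0 := by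
    unfold Fsum
    rw [← Equiv.sum_comp (Equiv.funUnique (Fin 1) α).symm]
    refine Finset.sum_congr rfl fun x _ => ?_
    simp [Equiv.funUnique, Function.injective_of_subsingleton]
  have hFsucc : Fsum X ψ (n + 1) = ∑ x : α, ∑ f : Fin n → α,
      if (Function.Injective f ∧ ∀ i, f i ∈ X) ∧ x ∈ X ∧ x ∉ Set.range f
      then ψ x * ∏ i, ψ (f i) else 0 := by
    unfold Fsum
    rw [← Equiv.sum_comp (Fin.consEquiv fun _ => α), Fintype.sum_prod_type]
    simp only [Fin.consEquiv, Equiv.coe_fn_mk]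
    refine Finset.sum_congr rfl fun x _ => Finset.sum_congr rfl fun f _ => ?_
    have h1 : Function.Injective (Fin.cons x f : Fin (n+1) → α) ↔
        x ∉ Set.range f ∧ Function.Injective f := Fin.cons_injective_iff
    have h2 : (∀ i, (Fin.cons x f : Fin (n+1) → α) i ∈ X) ↔ x ∈ X ∧ ∀ i, f i ∈ X := by
      rw [Fin.forall_fin_succ]; simp
    have h3 : (∏ i, ψ ((Fin.cons x f : Fin (n+1) → α) i)) = ψ x * ∏ i, ψ (f i) := by
      rw [show (fun i => ψ ((Fin.cons x f : Fin (n+1) → α) i)) = Fin.cons (ψ x) (fun i => ψ (f i)) from ?_]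
      · exact Fin.prod_cons _ _
      · funext i
        refine Fin.cases ?_ ?_ i <;> simp
    simp only [Fin.consEquiv_apply, h3]
    rw [if_congr (iff_of_eq (congrArg₂ And (propext h1) (propext h2))) rfl rfl]
    by_cases hc : (Function.Injective f ∧ ∀ i, f i ∈ X) ∧ x ∈ X ∧ x ∉ Set.range f
    · rw [if_pos ⟨⟨hc.2.2, hc.1.1⟩, hc.2.1, hc.1.2⟩, if_pos hc]
    · rw [if_neg, if_neg hc]
      intro h; exact hc ⟨⟨h.1.2, h.2.2⟩, h.2.1, h.1.1⟩
  rw [hF1, hFsucc]; unfold Fsum; rw [Finset.sum_mul_sum]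
  have hsplit : ∀ x : α, ∀ f : Fin n → α,
      (if x ∈ X then ψ x else 0) *
        (if Function.Injective f ∧ ∀ i, f i ∈ X then ∏ i, ψ (f i) else 0)
      = (if (Function.Injective f ∧ ∀ i, f i ∈ X) ∧ x ∈ X ∧ x ∉ Set.range f
          then ψ x * ∏ i, ψ (f i) else 0)
        + (if (Function.Injective f ∧ ∀ i, f i ∈ X) ∧ x ∈ X ∧ x ∈ Set.range f
          then ψ x * ∏ i, ψ (f i) else 0) := by
    intro x f
    by_cases h1 : x ∈ X <;> by_cases h2 : Function.Injective f ∧ ∀ i, f i ∈ X <;>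
      by_cases h3 : x ∈ Set.range f <;> simp [h1, h2, h3]
  simp only [hsplit, Finset.sum_add_distrib]
  refine add_le_add (le_refl _) ?_
  rw [Finset.sum_comm, Finset.mul_sum]
  refine Finset.sum_le_sum fun f _ => ?_
  by_cases hc : Function.Injective f ∧ ∀ i, f i ∈ X
  · have hP : 0 ≤ ∏ i, ψ (f i) :=
      Finset.prod_nonneg fun i _ => (hψ _ (hc.2 i)).1.le
    rw [if_pos hc]
    calc (∑ x : α, if (Function.Injective f ∧ ∀ i, f i ∈ X) ∧ x ∈ X ∧ x ∈ Set.range f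
            then ψ x * ∏ i, ψ (f i) else 0)
        ≤ ∑ x : α, (if x ∈ Finset.image f Finset.univ then ∏ i, ψ (f i) else 0) := by
          refine Finset.sum_le_sum fun x _ => ?_
          by_cases h : (Function.Injective f ∧ ∀ i, f i ∈ X) ∧ x ∈ X ∧ x ∈ Set.range f
          · rw [if_pos h]
            obtain ⟨i, hi⟩ := h.2.2
            rw [if_pos (Finset.mem_image.2 ⟨i, Finset.mem_univ i, hi⟩)]
            exact mul_le_of_le_one_left hP (hψ x h.2.1).2
          · rw [if_neg h]
            split_ifs <;> simp [hP]
      _ = ((Finset.image f Finset.univ).card : ℝ) * ∏ i, ψ (f i) := by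
          rw [Finset.sum_ite_mem, Finset.univ_inter, Finset.sum_const, nsmul_eq_mul]
      _ ≤ (n : ℝ) * ∏ i, ψ (f i) := by
          rw [Finset.card_image_of_injective _ hc.1, Finset.card_univ, Fintype.card_fin]
  · simp [hc]
end

section
/- Let X be a finite set and ψ : X → (0,1], with F_n defined as the sum over ordered n-tuples of pairwise distinct elements of products of ψ. Then for every n ≥ 1: F_2·F_n ≤ F_{n+2} + 2n·F_{n+1} + n(n−1)·F_n. -/
open scoped Classical

section helpers
lemma sum_le_inj {β γ : Type*} (s : Finset β) (t : Finset γ)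
    (e : β → γ) (w : β → ℝ) (v : γ → ℝ)
    (he : ∀ q ∈ s, e q ∈ t)
    (hinj : ∀ q ∈ s, ∀ r ∈ s, e q = e r → q = r)
    (hv : ∀ x ∈ t, 0 ≤ v x)
    (hw : ∀ q ∈ s, w q ≤ v (e q)) :
    ∑ q ∈ s, w q ≤ ∑ x ∈ t, v x := by
  classical
  calc ∑ q ∈ s, w q ≤ ∑ q ∈ s, v (e q) := Finset.sum_le_sum hw
    _ = ∑ x ∈ s.image e, v x := (Finset.sum_image hinj).symm
    _ ≤ ∑ x ∈ t, v x := Finset.sum_le_sum_of_subset_of_nonneg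
        (Finset.image_subset_iff.mpr he) (fun x hx _ => hv x hx)

lemma append_injective {β : Type*} {n m : ℕ} {f : Fin n → β} {g : Fin m → β}
    (hf : Function.Injective f) (hg : Function.Injective g)
    (hd : ∀ i j, f i ≠ g j) : Function.Injective (Fin.append f g) := by
  intro a b h
  induction a using Fin.addCases with
  | left i =>
    induction b using Fin.addCases with
    | left j =>
      simp only [Fin.append_left] at h
      exact congrArg _ (hf h)
    | right j =>
      simp only [Fin.append_left, Fin.append_right] at h
      exact absurd h (hd i j)
  | right i =>
    induction b using Fin.addCases with
    | left j =>
      simp only [Fin.append_left, Fin.append_right] at h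
      exact absurd h.symm (hd j i)
    | right j =>
      simp only [Fin.append_right] at h
      exact congrArg _ (hg h)

lemma append_mem {β : Type*} {X : Finset β} {n m : ℕ} {f : Fin n → β} {g : Fin m → β}
    (hf : ∀ i, f i ∈ X) (hg : ∀ j, g j ∈ X) : ∀ k, Fin.append f g k ∈ X := by
  intro k
  induction k using Fin.addCases with
  | left i => simpa using hf i
  | right j => simpa using hg j

lemma append_prod {β : Type*} {n m : ℕ} (ψ : β → ℝ) (f : Fin n → β) (g : Fin m → β) :
    ∏ k, ψ (Fin.append f g k) = (∏ i, ψ (f i)) * ∏ j, ψ (g j) := by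
  rw [Fin.prod_univ_add]
  simp [Fin.append_left, Fin.append_right]

lemma append_cancel {β : Type*} {n m : ℕ} {f f' : Fin n → β} {g g' : Fin m → β}
    (h : Fin.append f g = Fin.append f' g') : f = f' ∧ g = g' := by
  constructor
  · funext i
    have := congrFun h (Fin.castAdd m i)
    simpa [Fin.append_left] using this
  · funext j
    have := congrFun h (Fin.natAdd n j)
    simpa [Fin.append_right] using this
end helpers

/-- For ψ : X → (0,1] and n ≥ 1,
F_2·F_n ≤ F_{n+2} + 2n·F_{n+1} + n(n−1)·F_n. -/
theorem stmt10 {α : Type*} [Fintype α] (X : Finset α) (ψ : α → ℝ)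
    (hψ : ∀ x ∈ X, 0 < ψ x ∧ ψ x ≤ 1) :
    ∀ n : ℕ, 1 ≤ n →
      Fsum X ψ 2 * Fsum X ψ n
        ≤ Fsum X ψ (n + 2) + 2 * (n : ℝ) * Fsum X ψ (n + 1)
          + (n : ℝ) * ((n : ℝ) - 1) * Fsum X ψ n := by
  intro n hn
  classical
  -- packaged injective-tuple sets
  set P : (m : ℕ) → Finset (Fin m → α) :=
    fun m => Finset.univ.filter (fun f => Function.Injective f ∧ ∀ i, f i ∈ X) with hP
  have hF : ∀ m, Fsum X ψ m = ∑ f ∈ P m, ∏ i, ψ (f i) := by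
    intro m
    rw [Fsum, hP, Finset.sum_filter]
  have hmemP : ∀ {m : ℕ} {f : Fin m → α}, f ∈ P m ↔ Function.Injective f ∧ ∀ i, f i ∈ X := by
    intro m f
    simp [hP]
  have hpos : ∀ {m : ℕ}, ∀ f ∈ P m, (0:ℝ) ≤ ∏ i, ψ (f i) := by
    intro m f hf
    exact Finset.prod_nonneg fun i _ => (hψ _ ((hmemP.mp hf).2 i)).1.le
  -- the weight on pairs
  set w : (Fin 2 → α) × (Fin n → α) → ℝ :=
    fun q => (∏ j, ψ (q.1 j)) * ∏ i, ψ (q.2 i) with hw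
  set s : Finset ((Fin 2 → α) × (Fin n → α)) := P 2 ×ˢ P n with hs
  have hprod : Fsum X ψ 2 * Fsum X ψ n = ∑ q ∈ s, w q := by
    rw [hF 2, hF n, Finset.sum_mul_sum, hs, Finset.sum_product]
  -- splitting predicates
  set p0 : (Fin 2 → α) × (Fin n → α) → Prop := fun q => ∃ i, q.2 i = q.1 0 with hp0
  set p1 : (Fin 2 → α) × (Fin n → α) → Prop := fun q => ∃ i, q.2 i = q.1 1 with hp1
  have hsplit : ∑ q ∈ s, w q
      = ∑ q ∈ s.filter (fun q => ¬ p0 q ∧ ¬ p1 q), w q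
      + ∑ q ∈ s.filter (fun q => p0 q ∧ ¬ p1 q), w q
      + ∑ q ∈ s.filter (fun q => ¬ p0 q ∧ p1 q), w q
      + ∑ q ∈ s.filter (fun q => p0 q ∧ p1 q), w q := by
    rw [← Finset.sum_filter_add_sum_filter_not s p0 w,
        ← Finset.sum_filter_add_sum_filter_not (s.filter p0) p1 w,
        ← Finset.sum_filter_add_sum_filter_not (s.filter fun q => ¬ p0 q) p1 w,
        Finset.filter_filter, Finset.filter_filter, Finset.filter_filter,
        Finset.filter_filter]
    ring_nf
  -- facts about members of s
  have hmem : ∀ q ∈ s, (Function.Injective q.1 ∧ ∀ j, q.1 j ∈ X)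
      ∧ (Function.Injective q.2 ∧ ∀ i, q.2 i ∈ X) := by
    intro q hq
    rw [hs, Finset.mem_product] at hq
    exact ⟨hmemP.mp hq.1, hmemP.mp hq.2⟩
  have i0 : Fin n := ⟨0, hn⟩
  -- Bound A
  have hA : ∑ q ∈ s.filter (fun q => ¬ p0 q ∧ ¬ p1 q), w q ≤ Fsum X ψ (n + 2) := by
    rw [hF (n + 2)]
    refine sum_le_inj _ _ (fun q => Fin.append q.2 q.1) w (fun h => ∏ k, ψ (h k))
      ?_ ?_ (fun h hh => hpos h hh) ?_
    · intro q hq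
      rw [Finset.mem_filter] at hq
      obtain ⟨hqs, hn0, hn1⟩ := hq
      obtain ⟨⟨hg1, hg2⟩, hf1, hf2⟩ := hmem q hqs
      refine hmemP.mpr ⟨append_injective hf1 hg1 ?_, append_mem hf2 hg2⟩
      intro i j hij
      fin_cases j
      · exact hn0 ⟨i, hij⟩
      · exact hn1 ⟨i, hij⟩
    · intro q hq r hr h
      obtain ⟨h2, h1⟩ := append_cancel h
      exact Prod.ext h1 h2
    · intro q hq
      show w q ≤ ∏ k : Fin (n + 2), ψ (Fin.append q.2 q.1 k)
      rw [append_prod]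
      simp only [hw]
      exact le_of_eq (mul_comm _ _)
  -- Bound B
  have hB : ∑ q ∈ s.filter (fun q => p0 q ∧ ¬ p1 q), w q ≤ (n : ℝ) * Fsum X ψ (n + 1) := by
    have ht : ∑ x ∈ ((Finset.univ : Finset (Fin n)) ×ˢ P (n + 1)), (∏ k, ψ (x.2 k))
        = (n : ℝ) * Fsum X ψ (n + 1) := by
      rw [Finset.sum_product]
      have hc : ∀ x : Fin n, ∑ y ∈ P (n + 1), ∏ k, ψ ((x, y).2 k) = Fsum X ψ (n + 1) :=
        fun x => (hF (n + 1)).symm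
      rw [Finset.sum_congr rfl fun x _ => hc x, Finset.sum_const, Finset.card_univ,
        Fintype.card_fin, nsmul_eq_mul]
    refine le_trans (sum_le_inj _ _
      (fun q => (if h : ∃ i, q.2 i = q.1 0 then h.choose else i0, Fin.append q.2 ![q.1 1]))
      w (fun x => ∏ k, ψ (x.2 k)) ?_ ?_ ?_ ?_) (le_of_eq ht)
    · intro q hq
      rw [Finset.mem_filter] at hq
      obtain ⟨hqs, hq0, hq1⟩ := hq
      obtain ⟨⟨hg1, hg2⟩, hf1, hf2⟩ := hmem q hqs
      rw [Finset.mem_product]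
      refine ⟨Finset.mem_univ _, hmemP.mpr ⟨append_injective hf1
        (Function.injective_of_subsingleton _) ?_, append_mem hf2 ?_⟩⟩
      · intro i j hij
        rw [Subsingleton.elim j 0] at hij
        exact hq1 ⟨i, by simpa using hij⟩
      · intro j
        rw [Subsingleton.elim j 0]
        simpa using hg2 1
    · intro q hq r hr h
      rw [Finset.mem_filter] at hq hr
      rw [Prod.mk.injEq] at h
      obtain ⟨h1, h2⟩ := h
      obtain ⟨hf, hg⟩ := append_cancel h2
      have hgg : q.1 1 = r.1 1 := by simpa using congrFun hg 0
      obtain ⟨hqs, hq0, -⟩ := hq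
      obtain ⟨hrs, hr0, -⟩ := hr
      rw [dif_pos hq0, dif_pos hr0] at h1
      have hq0' : q.2 hq0.choose = q.1 0 := hq0.choose_spec
      have hr0' : r.2 hr0.choose = r.1 0 := hr0.choose_spec
      have h00 : q.1 0 = r.1 0 := by rw [← hq0', ← hr0', h1, hf]
      refine Prod.ext ?_ hf
      funext j
      fin_cases j
      · exact h00
      · exact hgg
    · intro x hx
      rw [Finset.mem_product] at hx
      exact hpos x.2 hx.2
    · intro q hq
      rw [Finset.mem_filter] at hq
      obtain ⟨hqs, hq0, hq1⟩ := hq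
      obtain ⟨⟨hg1, hg2⟩, hf1, hf2⟩ := hmem q hqs
      show w q ≤ ∏ k : Fin (n + 1), ψ (Fin.append q.2 ![q.1 1] k)
      rw [append_prod]
      simp only [hw, Fin.prod_univ_two, Fin.prod_univ_one, Matrix.cons_val_zero]
      have h0 : ψ (q.1 0) ≤ 1 := (hψ _ (hg2 0)).2
      have h0' : 0 ≤ ψ (q.1 0) := (hψ _ (hg2 0)).1.le
      have h1 : 0 ≤ ψ (q.1 1) := (hψ _ (hg2 1)).1.le
      have hPP : 0 ≤ ∏ i, ψ (q.2 i) := Finset.prod_nonneg fun i _ => (hψ _ (hf2 i)).1.le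
      nlinarith [mul_nonneg h1 hPP]
  -- Bound C
  have hC : ∑ q ∈ s.filter (fun q => ¬ p0 q ∧ p1 q), w q ≤ (n : ℝ) * Fsum X ψ (n + 1) := by
    have ht : ∑ x ∈ ((Finset.univ : Finset (Fin n)) ×ˢ P (n + 1)), (∏ k, ψ (x.2 k))
        = (n : ℝ) * Fsum X ψ (n + 1) := by
      rw [Finset.sum_product]
      have hc : ∀ x : Fin n, ∑ y ∈ P (n + 1), ∏ k, ψ ((x, y).2 k) = Fsum X ψ (n + 1) :=
        fun x => (hF (n + 1)).symm
      rw [Finset.sum_congr rfl fun x _ => hc x, Finset.sum_const, Finset.card_univ,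
        Fintype.card_fin, nsmul_eq_mul]
    refine le_trans (sum_le_inj _ _
      (fun q => (if h : ∃ i, q.2 i = q.1 1 then h.choose else i0, Fin.append q.2 ![q.1 0]))
      w (fun x => ∏ k, ψ (x.2 k)) ?_ ?_ ?_ ?_) (le_of_eq ht)
    · intro q hq
      rw [Finset.mem_filter] at hq
      obtain ⟨hqs, hq0, hq1⟩ := hq
      obtain ⟨⟨hg1, hg2⟩, hf1, hf2⟩ := hmem q hqs
      rw [Finset.mem_product]
      refine ⟨Finset.mem_univ _, hmemP.mpr ⟨append_injective hf1
        (Function.injective_of_subsingleton _) ?_, append_mem hf2 ?_⟩⟩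
      · intro i j hij
        rw [Subsingleton.elim j 0] at hij
        exact hq0 ⟨i, by simpa using hij⟩
      · intro j
        rw [Subsingleton.elim j 0]
        simpa using hg2 0
    · intro q hq r hr h
      rw [Finset.mem_filter] at hq hr
      rw [Prod.mk.injEq] at h
      obtain ⟨h1, h2⟩ := h
      obtain ⟨hf, hg⟩ := append_cancel h2
      have hgg : q.1 0 = r.1 0 := by simpa using congrFun hg 0
      obtain ⟨hqs, -, hq1⟩ := hq
      obtain ⟨hrs, -, hr1⟩ := hr
      rw [dif_pos hq1, dif_pos hr1] at h1
      have hq1' : q.2 hq1.choose = q.1 1 := hq1.choose_spec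
      have hr1' : r.2 hr1.choose = r.1 1 := hr1.choose_spec
      have h11 : q.1 1 = r.1 1 := by rw [← hq1', ← hr1', h1, hf]
      refine Prod.ext ?_ hf
      funext j
      fin_cases j
      · exact hgg
      · exact h11
    · intro x hx
      rw [Finset.mem_product] at hx
      exact hpos x.2 hx.2
    · intro q hq
      rw [Finset.mem_filter] at hq
      obtain ⟨hqs, hq0, hq1⟩ := hq
      obtain ⟨⟨hg1, hg2⟩, hf1, hf2⟩ := hmem q hqs
      show w q ≤ ∏ k : Fin (n + 1), ψ (Fin.append q.2 ![q.1 0] k)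
      rw [append_prod]
      simp only [hw, Fin.prod_univ_two, Fin.prod_univ_one, Matrix.cons_val_zero]
      have h0 : ψ (q.1 1) ≤ 1 := (hψ _ (hg2 1)).2
      have h0' : 0 ≤ ψ (q.1 1) := (hψ _ (hg2 1)).1.le
      have h1 : 0 ≤ ψ (q.1 0) := (hψ _ (hg2 0)).1.le
      have hPP : 0 ≤ ∏ i, ψ (q.2 i) := Finset.prod_nonneg fun i _ => (hψ _ (hf2 i)).1.le
      nlinarith [mul_nonneg h1 hPP]
  -- Bound D
  have hD : ∑ q ∈ s.filter (fun q => p0 q ∧ p1 q), w q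
      ≤ (n : ℝ) * ((n : ℝ) - 1) * Fsum X ψ n := by
    have hcard : ((Finset.univ : Finset (Fin n)).offDiag.card : ℝ)
        = (n : ℝ) * ((n : ℝ) - 1) := by
      rw [Finset.offDiag_card, Finset.card_univ, Fintype.card_fin]
      have hle : n ≤ n * n := Nat.le_mul_of_pos_left n hn
      push_cast [hle]
      ring
    have ht : ∑ x ∈ ((Finset.univ : Finset (Fin n)).offDiag ×ˢ P n), (∏ k, ψ (x.2 k))
        = (n : ℝ) * ((n : ℝ) - 1) * Fsum X ψ n := by
      rw [Finset.sum_product]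
      have hc : ∀ x : Fin n × Fin n, ∑ y ∈ P n, ∏ k, ψ ((x, y).2 k) = Fsum X ψ n :=
        fun x => (hF n).symm
      rw [Finset.sum_congr rfl fun x _ => hc x, Finset.sum_const, nsmul_eq_mul, hcard]
    refine le_trans (sum_le_inj _ _
      (fun q => ((if h : ∃ i, q.2 i = q.1 0 then h.choose else i0,
                  if h : ∃ i, q.2 i = q.1 1 then h.choose else i0), q.2))
      w (fun x => ∏ k, ψ (x.2 k)) ?_ ?_ ?_ ?_) (le_of_eq ht)
    · intro q hq
      rw [Finset.mem_filter] at hq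
      obtain ⟨hqs, hq0, hq1⟩ := hq
      obtain ⟨⟨hg1, hg2⟩, hf1, hf2⟩ := hmem q hqs
      rw [Finset.mem_product]
      rw [hs, Finset.mem_product] at hqs
      refine ⟨Finset.mem_offDiag.mpr ⟨Finset.mem_univ _, Finset.mem_univ _, ?_⟩, hqs.2⟩
      have hq0' : ∃ i, q.2 i = q.1 0 := hq0
      have hq1' : ∃ i, q.2 i = q.1 1 := hq1
      show (if h : ∃ i, q.2 i = q.1 0 then h.choose else i0)
          ≠ (if h : ∃ i, q.2 i = q.1 1 then h.choose else i0)
      rw [dif_pos hq0', dif_pos hq1']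
      intro hij
      have h01 : q.1 0 = q.1 1 := by
        rw [← hq0'.choose_spec, ← hq1'.choose_spec, hij]
      have := hg1 h01
      simp at this
    · intro q hq r hr h
      rw [Finset.mem_filter] at hq hr
      rw [Prod.mk.injEq, Prod.mk.injEq] at h
      obtain ⟨⟨h1, h2⟩, hf⟩ := h
      obtain ⟨hqs, hq0, hq1⟩ := hq
      obtain ⟨hrs, hr0, hr1⟩ := hr
      rw [dif_pos hq0, dif_pos hr0] at h1
      rw [dif_pos hq1, dif_pos hr1] at h2
      have h00 : q.1 0 = r.1 0 := by
        rw [← hq0.choose_spec, ← hr0.choose_spec, h1, hf]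
      have h11 : q.1 1 = r.1 1 := by
        rw [← hq1.choose_spec, ← hr1.choose_spec, h2, hf]
      refine Prod.ext ?_ hf
      funext j
      fin_cases j
      · exact h00
      · exact h11
    · intro x hx
      rw [Finset.mem_product] at hx
      exact hpos x.2 hx.2
    · intro q hq
      rw [Finset.mem_filter] at hq
      obtain ⟨hqs, hq0, hq1⟩ := hq
      obtain ⟨⟨hg1, hg2⟩, hf1, hf2⟩ := hmem q hqs
      show w q ≤ ∏ k, ψ (q.2 k)
      simp only [hw, Fin.prod_univ_two]
      have h0 : ψ (q.1 0) ≤ 1 := (hψ _ (hg2 0)).2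
      have h0' : 0 ≤ ψ (q.1 0) := (hψ _ (hg2 0)).1.le
      have h1 : ψ (q.1 1) ≤ 1 := (hψ _ (hg2 1)).2
      have h1' : 0 ≤ ψ (q.1 1) := (hψ _ (hg2 1)).1.le
      have hPP : 0 ≤ ∏ i, ψ (q.2 i) := Finset.prod_nonneg fun i _ => (hψ _ (hf2 i)).1.le
      have h01 : ψ (q.1 0) * ψ (q.1 1) ≤ 1 := mul_le_one₀ h0 h1' h1
      nlinarith [mul_le_mul_of_nonneg_right h01 hPP]
  rw [hprod, hsplit]
  linarith
end
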